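/- arXiv:2001.11848 — 2 statements merged into one kernel-verified Lean document; each statement's English description precedes it below -/
import Mathlib

section
/- In the Weil algebra W g, the curvature elements μ(x) satisfy the equivariance rule L(ξ)μ(x) = -μ(ad*(ξ)x) for all ξ ∈ g and x ∈ g*; consequently the subalgebra generated by the μ(x) has basic part isomorphic to the invariant polynomials (S g*)^g. -/
/-- The coadjoint action on the dual: `⟨ad*(ξ)x, η⟩ = -⟨x, [ξ,η]⟩`. -/
noncomputable def coadAction (F : Type) [Field F]
    (g : Type) [LieRing g] [LieAlgebra F g]
    (ξ : g) (x : Module.Dual F g) : Module.Dual F g :=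
  -(x ∘ₗ (LieAlgebra.ad F g ξ))

/-! `L(ξ)` acts on a quadratic element `∑ ω(eᵢ, eⱼ) θ(εᵢ)θ(εⱼ)` by transporting the bilinear form
`ω` along the derivation `ω ↦ ω(ad ξ ·, ·) + ω(·, ad ξ ·)`: summing out one index turns
`∑ᵢ ω(eᵢ, v) εᵢ` back into the functional `ω(·, v)`, on which `L(ξ)` acts through `θ`. For
`ω = x ∘ [·, ·]` the Jacobi identity identifies the transported form with that of `-ad*(ξ)x`, and
`θ̇` transforms in the same way by hypothesis. -/

open Module

section QuadraticTheta

variable {R M A ι : Type*} [CommSemiring R] [AddCommMonoid M] [Module R M] [Semiring A]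
  [Algebra R A] [Fintype ι] [DecidableEq ι] (b : Basis ι R M)

theorem Module.Basis.sum_apply_smul_dualBasis (f : Dual R M) :
    ∑ i, f (b i) • b.dualBasis i = f := by
  simp

theorem Module.Basis.sum_sum_smul_mul_dualBasis_eq_sum_flip (φ ψ : Dual R M →ₗ[R] A)
    (ω : LinearMap.BilinForm R M) :
    ∑ i, ∑ j, ω (b i) (b j) • (φ (b.dualBasis i) * ψ (b.dualBasis j)) =
      ∑ j, φ (LinearMap.flip ω (b j)) * ψ (b.dualBasis j) := by
  rw [Finset.sum_comm]
  refine Finset.sum_congr rfl fun j _ => ?_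
  rw [← b.sum_apply_smul_dualBasis (LinearMap.flip ω (b j)), map_sum, Finset.sum_mul]
  simp

theorem Module.Basis.sum_sum_smul_mul_dualBasis_eq_sum (φ ψ : Dual R M →ₗ[R] A)
    (ω : LinearMap.BilinForm R M) :
    ∑ i, ∑ j, ω (b i) (b j) • (φ (b.dualBasis i) * ψ (b.dualBasis j)) =
      ∑ i, φ (b.dualBasis i) * ψ (ω (b i)) := by
  refine Finset.sum_congr rfl fun i _ => ?_
  rw [← b.sum_apply_smul_dualBasis (ω (b i)), map_sum, Finset.mul_sum]
  simp

variable (θ : Dual R M →ₗ[R] A)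

/-- With `ω = bracketForm x` this is `-θ(λ(x))`. -/
noncomputable def quadraticTheta : LinearMap.BilinForm R M →ₗ[R] A where
  toFun ω := ∑ i, ∑ j, ω (b i) (b j) • (θ (b.dualBasis i) * θ (b.dualBasis j))
  map_add' ω ω' := by simp only [LinearMap.add_apply, add_smul, Finset.sum_add_distrib]
  map_smul' c ω := by
    simp only [LinearMap.smul_apply, smul_eq_mul, mul_smul, Finset.smul_sum, RingHom.id_apply]

theorem map_quadraticTheta (D : A →ₗ[R] A) (a : Module.End R M)
    (hD : ∀ y, D (θ y) = θ (y ∘ₗ a))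
    (hDmul : ∀ y z, D (θ y * θ z) = D (θ y) * θ z + θ y * D (θ z))
    (ω : LinearMap.BilinForm R M) :
    D (quadraticTheta b θ ω) = quadraticTheta b θ (ω ∘ₗ a + ω.compl₂ a) := by
  set θa := θ ∘ₗ Dual.transpose a
  have hθa : ∀ y, D (θ y) = θa y := hD
  calc D (quadraticTheta b θ ω)
      = ∑ i, ∑ j, ω (b i) (b j) • (θa (b.dualBasis i) * θ (b.dualBasis j)) +
          ∑ i, ∑ j, ω (b i) (b j) • (θ (b.dualBasis i) * θa (b.dualBasis j)) := by
        simp only [quadraticTheta, LinearMap.coe_mk, AddHom.coe_mk, map_sum, map_smul, hDmul,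
          hθa, smul_add, Finset.sum_add_distrib]
    _ = ∑ j, θ ((ω ∘ₗ a).flip (b j)) * θ (b.dualBasis j) +
          ∑ i, θ (b.dualBasis i) * θ (ω.compl₂ a (b i)) := by
        rw [b.sum_sum_smul_mul_dualBasis_eq_sum_flip, b.sum_sum_smul_mul_dualBasis_eq_sum]
        rfl
    _ = quadraticTheta b θ (ω ∘ₗ a) + quadraticTheta b θ (ω.compl₂ a) :=
        congr_arg₂ (· + ·) (b.sum_sum_smul_mul_dualBasis_eq_sum_flip θ θ _).symm
          (b.sum_sum_smul_mul_dualBasis_eq_sum θ θ _).symm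
    _ = quadraticTheta b θ (ω ∘ₗ a + ω.compl₂ a) := (map_add _ _ _).symm

end QuadraticTheta

noncomputable def bracketForm {R L : Type*} [CommRing R] [LieRing L] [LieAlgebra R L]
    (x : Dual R L) : LinearMap.BilinForm R L :=
  (LieModule.toEnd R L L : L →ₗ[R] Module.End R L).compr₂ x

theorem bracketForm_coadAction {F g : Type} [Field F] [LieRing g] [LieAlgebra F g] (ξ : g)
    (x : Dual F g) :
    bracketForm x ∘ₗ LieAlgebra.ad F g ξ + (bracketForm x).compl₂ (LieAlgebra.ad F g ξ) =
      -bracketForm (coadAction F g ξ x) := by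
  ext u v
  simp [bracketForm, coadAction]

theorem weil_curvature_equivariance_general
    (F : Type) [Field F]
    (g : Type) [LieRing g] [LieAlgebra F g]
    (n : ℕ) (b : Module.Basis (Fin n) F g)
    (A : Type) [Ring A] [Algebra F A]
    (θ θdot : Module.Dual F g →ₗ[F] A)
    (L : g → A →ₗ[F] A)
    (hLθ : ∀ (ξ : g) (x : Module.Dual F g),
      L ξ (θ x) = -θ (coadAction F g ξ x))
    (hLθdot : ∀ (ξ : g) (x : Module.Dual F g),
      L ξ (θdot x) = -θdot (coadAction F g ξ x))
    (hLmul : ∀ (ξ : g) (x y : Module.Dual F g),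
      L ξ (θ x * θ y) = L ξ (θ x) * θ y + θ x * L ξ (θ y)) :
    ∀ μ : Module.Dual F g → A,
      μ = (fun x => θdot x + (2 : F)⁻¹ •
        (-(∑ i : Fin n, ∑ j : Fin n,
            x ⁅b i, b j⁆ • (θ (b.dualBasis i) * θ (b.dualBasis j))))) →
      (∀ (ξ : g) (x : Module.Dual F g),
        L ξ (μ x) = -μ (coadAction F g ξ x)) ∧
      (∀ x : Module.Dual F g, (∀ ξ : g, coadAction F g ξ x = 0) →
        ∀ ξ : g, L ξ (μ x) = 0) := by
  intro μ hμ
  have hμ_quad : ∀ x, μ x = θdot x + (2 : F)⁻¹ • -quadraticTheta b θ (bracketForm x) :=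
    fun x => by rw [hμ]; rfl
  have hLquad : ∀ ξ x, L ξ (quadraticTheta b θ (bracketForm x)) =
      -quadraticTheta b θ (bracketForm (coadAction F g ξ x)) := fun ξ x => by
    rw [map_quadraticTheta b θ (L ξ) (LieAlgebra.ad F g ξ) (fun y => by simp [hLθ, coadAction])
      (hLmul ξ), bracketForm_coadAction, map_neg (quadraticTheta b θ)]
  have equivariance : ∀ ξ x, L ξ (μ x) = -μ (coadAction F g ξ x) := fun ξ x => by
    rw [hμ_quad, hμ_quad, map_add, map_smul, map_neg, hLθdot, hLquad, neg_add, smul_neg,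
      smul_neg]
  refine ⟨equivariance, fun x hx ξ => ?_⟩
  rw [equivariance, hx, hμ]
  simp

/-- In the Weil algebra `W g` of a finite-dimensional Lie algebra `g`
(generators `θ(x)` in degree 1 and `θ̇(x)` in degree 2, the Lie derivative
`L(ξ)` acting as a derivation with `L(ξ)θ(x) = -θ(ad*(ξ)x)` and
`L(ξ)θ̇(x) = -θ̇(ad*(ξ)x)`), the curvature elements
`μ(x) = θ̇(x) + ½ θ(λ(x))`, with `λ` dual to the Lie bracket (in terms of a
basis `e_i` with dual basis `ε_i`,
`θ(λ(x)) = -∑_{i,j} x([e_i,e_j]) θ(ε_i)θ(ε_j)`), satisfy the equivariance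
rule `L(ξ)μ(x) = -μ(ad*(ξ)x)`; consequently, on the subalgebra generated by the
curvature elements, the basic (invariant) part corresponds to the invariant
polynomials `(S g*)^g`: in particular `μ(x)` is `L`-invariant whenever `x` is a
coadjoint-invariant element of `g*`. -/
theorem weil_curvature_equivariance
    (F : Type) [Field F] [CharZero F]
    (g : Type) [LieRing g] [LieAlgebra F g]
    (n : ℕ) (b : Module.Basis (Fin n) F g)
    (A : Type) [Ring A] [Algebra F A]
    (θ θdot : Module.Dual F g →ₗ[F] A)
    (L : g → A →ₗ[F] A)
    (hLθ : ∀ (ξ : g) (x : Module.Dual F g),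
      L ξ (θ x) = -θ (coadAction F g ξ x))
    (hLθdot : ∀ (ξ : g) (x : Module.Dual F g),
      L ξ (θdot x) = -θdot (coadAction F g ξ x))
    (hLmul : ∀ (ξ : g) (x y : Module.Dual F g),
      L ξ (θ x * θ y) = L ξ (θ x) * θ y + θ x * L ξ (θ y)) :
    ∀ μ : Module.Dual F g → A,
      μ = (fun x => θdot x + (2 : F)⁻¹ •
        (-(∑ i : Fin n, ∑ j : Fin n,
            x ⁅b i, b j⁆ • (θ (b.dualBasis i) * θ (b.dualBasis j))))) →
      (∀ (ξ : g) (x : Module.Dual F g),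
        L ξ (μ x) = -μ (coadAction F g ξ x)) ∧
      (∀ x : Module.Dual F g, (∀ ξ : g, coadAction F g ξ x = 0) →
        ∀ ξ : g, L ξ (μ x) = 0) :=
  weil_curvature_equivariance_general F g n b A θ θdot L hLθ hLθdot hLmul
end

section
/- Let π: E → M be an oriented rank-r vector bundle admitting a Thom form. Then any two Thom forms of E are cohomologous in H_cv^r(E), and the Thom class is the unique class u ∈ H_cv^r(E) with π_*(u) = 1. Moreover H_cv(E) is a free H(M)-module of rank 1 generated by the Thom class. -/
/-!
The homotopy `κ` shows that every cocycle `β` differs from `τ ∧ π*(π_*β)` by a coboundary.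
Applied to a second Thom form `τ'`, for which `π_*τ' = 1`, this makes `τ'` cohomologous to `τ`;
applied to an arbitrary cocycle it shows that `α ↦ τ ∧ π*α` is onto in cohomology. It is one to one
because the projection formula gives `π_*(τ ∧ π*α) = α`, and `π_*` maps coboundaries to coboundaries,
being a chain map up to the sign `(-1)^r`.
-/

theorem sub_eq_d_of_homotopy {R N : Type*} [Semiring R] [AddCommGroup N] [Module R N]
    (d κ : N →ₗ[R] N) (f : N → N)
    (hκ : ∀ β, f β - β = d (κ β) + κ (d β)) {β : N} (hβ : d β = 0) :
    β - f β = d (-κ β) := by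
  rw [map_neg, ← add_zero (d (κ β)), ← map_zero κ, ← hβ, ← hκ, neg_sub]

section SignedChainMap

variable {R A N : Type*} [CommRing R] [AddCommGroup A] [Module R A] [AddCommGroup N] [Module R N]
  {dA : A →ₗ[R] A} {dN : N →ₗ[R] N} {π : N →ₗ[R] A} {ε : R}

theorem map_closed_of_comp_eq_smul (hπd : dA ∘ₗ π = ε • (π ∘ₗ dN)) {β : N} (hβ : dN β = 0) :
    dA (π β) = 0 := by
  rw [← LinearMap.comp_apply, hπd, LinearMap.smul_apply, LinearMap.comp_apply, hβ, map_zero,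
    smul_zero]

theorem map_d_eq_d_smul_of_comp_eq_smul (hπd : dA ∘ₗ π = ε • (π ∘ₗ dN)) (hε : ε * ε = 1)
    (γ : N) : π (dN γ) = dA (ε • π γ) := by
  rw [map_smul, ← LinearMap.comp_apply dA, hπd, LinearMap.smul_apply, LinearMap.comp_apply,
    smul_smul, hε, one_smul]

end SignedChainMap

theorem neg_one_pow_mul_self {R : Type*} [Monoid R] [HasDistribNeg R] (r : ℕ) :
    (-1 : R) ^ r * (-1) ^ r = 1 := by
  rw [← pow_add, ← two_mul, pow_mul, neg_one_sq, one_pow]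

/-- `A` stands for `Ω(M)` and `N` for `Ω_cv(E)`, with `wedge β α = β ∧ π*α`, `πst` fibre
integration and `κ` the homotopy between `ζ_* ∘ π_*` and the identity. -/
theorem thom_class_unique_and_free_module_general
    (r : ℕ)
    (A : Type) [CommRing A] [Algebra ℝ A] (dM : A →ₗ[ℝ] A)
    (N : Type) [AddCommGroup N] [Module ℝ N]
    (dN : N →ₗ[ℝ] N) (wedge : N →ₗ[ℝ] A →ₗ[ℝ] N)
    (πst : N →ₗ[ℝ] A)
    (hproj : ∀ (β : N) (α : A), πst (wedge β α) = πst β * α)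
    (hπd : dM ∘ₗ πst = ((-1 : ℝ) ^ r) • (πst ∘ₗ dN))
    (hwedge_one : ∀ β : N, wedge β 1 = β)
    (τ : N) (hτint : πst τ = 1)
    (κ : N →ₗ[ℝ] N)
    (hκ : ∀ β : N, wedge τ (πst β) - β = dN (κ β) + κ (dN β)) :
    (∀ τ' : N, dN τ' = 0 → πst τ' = 1 → ∃ γ : N, τ' - τ = dN γ) ∧
    (∀ β : N, dN β = 0 →
      ∃ (α : A) (γ : N), dM α = 0 ∧ β - wedge τ α = dN γ) ∧
    (∀ α : A, dM α = 0 → (∃ γ : N, wedge τ α = dN γ) →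
      ∃ α' : A, α = dM α') := by
  have cocycle_sub_thom {β : N} (hβ : dN β = 0) : β - wedge τ (πst β) = dN (-κ β) :=
    sub_eq_d_of_homotopy dN κ _ hκ hβ
  refine ⟨fun τ' hτ'closed hτ'int => ?_, fun β hβ => ?_, fun α _ ⟨γ, hγ⟩ => ?_⟩
  · have hτ' := cocycle_sub_thom hτ'closed
    rw [hτ'int, hwedge_one] at hτ'
    exact ⟨_, hτ'⟩
  · exact ⟨πst β, _, map_closed_of_comp_eq_smul hπd hβ, cocycle_sub_thom hβ⟩
  · have hπζ : πst (wedge τ α) = α := by rw [hproj, hτint, one_mul]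
    refine ⟨(-1 : ℝ) ^ r • πst γ, ?_⟩
    rw [← map_d_eq_d_smul_of_comp_eq_smul hπd (neg_one_pow_mul_self r), ← hγ, hπζ]

/-- Let `π : E → M` be an oriented rank-`r` vector bundle admitting a Thom
form.  Abstractly, let `A = Ω(M)` be the de Rham algebra of the base and
`N = Ω_cv(E)` the vertically compactly supported forms on `E`, an `A`-module
via `β • α = β ∧ π*α`, with fibre integration `π_* : N → A` satisfying the
projection formula and commuting with `d` up to sign `(-1)^r`; let
`τ ∈ Ω_cv^r(E)` be a Thom form (`dτ = 0`, `π_*τ = 1`) such that (from the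
Paradan–Vergne argument) the Thom map `ζ_*(α) = τ ∧ π*α` is a homotopy
inverse of `π_*`, via a homotopy `κ` with `ζ_*π_* - id = dκ + κd`.  Then:

* any two Thom forms are cohomologous — the Thom class is the unique class
  `u ∈ H_cv^r(E)` with `π_*(u) = 1`; and
* `H_cv(E)` is a free `H(M)`-module of rank `1` generated by the Thom class:
  every cocycle of `N` is, up to a coboundary, of the form `τ ∧ π*α` with
  `α` a cocycle, and if `τ ∧ π*α` is a coboundary then `α` is a coboundary. -/
theorem thom_class_unique_and_free_module
    (r : ℕ)
    (A : Type) [CommRing A] [Algebra ℝ A] (dM : A →ₗ[ℝ] A)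
    (N : Type) [AddCommGroup N] [Module ℝ N]
    (dN : N →ₗ[ℝ] N) (wedge : N →ₗ[ℝ] A →ₗ[ℝ] N)
    (πst : N →ₗ[ℝ] A)
    (hdM : dM ∘ₗ dM = 0) (hdN : dN ∘ₗ dN = 0)
    (hproj : ∀ (β : N) (α : A), πst (wedge β α) = πst β * α)
    (hπd : dM ∘ₗ πst = ((-1 : ℝ) ^ r) • (πst ∘ₗ dN))
    (hwedge_one : ∀ β : N, wedge β 1 = β)
    (τ : N) (hτclosed : dN τ = 0) (hτint : πst τ = 1)
    (hLeibniz : ∀ α : A,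
      dN (wedge τ α) = wedge (dN τ) α + ((-1 : ℝ) ^ r) • wedge τ (dM α))
    (κ : N →ₗ[ℝ] N)
    (hκ : ∀ β : N, wedge τ (πst β) - β = dN (κ β) + κ (dN β)) :
    (∀ τ' : N, dN τ' = 0 → πst τ' = 1 → ∃ γ : N, τ' - τ = dN γ) ∧
    (∀ β : N, dN β = 0 →
      ∃ (α : A) (γ : N), dM α = 0 ∧ β - wedge τ α = dN γ) ∧
    (∀ α : A, dM α = 0 → (∃ γ : N, wedge τ α = dN γ) →
      ∃ α' : A, α = dM α') :=
  thom_class_unique_and_free_module_general r A dM N dN wedge πst hproj hπd hwedge_one τ hτint κ hκ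
end
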